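/- Let (M_n)_{n ≥ 1} be an inverse system of S-modules with S-linear transition maps π_{l,k} : M_l → M_k for k ≤ l, such that 𝔞^n M_n = 0 for all n, M_1 is finitely generated, and for all k ≤ l the map π_{l,k} is surjective with kernel exactly 𝔞^k M_l. Then the inverse limit M = lim_n M_n (realized as compatible families in the product ∏_n M_n) is a finitely generated S-module, and for every n the canonical map M/𝔞^n M → M_n is an isomorphism. -/
import Mathlib

noncomputable section

/-- The inverse limit of an inverse system of `S`-modules indexed by `ℕ`, realized as the
submodule of the product `∀ n, M n` consisting of the families compatible under the
transition maps. -/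
def invLimit (S : Type*) [CommRing S] (M : ℕ → Type*) [∀ n, AddCommGroup (M n)]
    [∀ n, Module S (M n)] (T : ∀ n, M (n + 1) →ₗ[S] M n) : Submodule S (∀ n, M n) where
  carrier := {s | ∀ n, T n (s (n + 1)) = s n}
  add_mem' := fun ha hb n => by simp [ha n, hb n]
  zero_mem' := fun n => by simp
  smul_mem' := fun c s hs n => by simp [hs n]

/-- The projection from the inverse limit to the `n`-th piece. -/
def invLimitProj (S : Type*) [CommRing S] (M : ℕ → Type*) [∀ n, AddCommGroup (M n)]
    [∀ n, Module S (M n)] (T : ∀ n, M (n + 1) →ₗ[S] M n) (n : ℕ) :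
    ↥(invLimit S M T) →ₗ[S] M n :=
  (LinearMap.proj n).comp (invLimit S M T).subtype

section MyAux

variable {S : Type*} [CommRing S]
variable {M : ℕ → Type*} [∀ n, AddCommGroup (M n)] [∀ n, Module S (M n)]

lemma my_ideal_smul_top_eq (J : Ideal S) : (J • ⊤ : Submodule S S) = J := by
  refine le_antisymm (Submodule.smul_le.2 fun r hr m _ => ?_) (fun a ha => ?_)
  · simpa using J.mul_mem_right m hr
  · simpa using Submodule.smul_mem_smul ha (Submodule.mem_top (x := (1 : S)))

variable {T : ∀ n, M (n + 1) →ₗ[S] M n}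

lemma invLimit_prop (s : invLimit S M T) (n : ℕ) : T n (s.1 (n + 1)) = s.1 n := s.2 n

variable {π : ∀ k l, k ≤ l → (M l →ₗ[S] M k)}

lemma proj_pi (hπ_refl : ∀ n, π n n le_rfl = LinearMap.id)
    (hπ_comp : ∀ k l m (hkl : k ≤ l) (hlm : l ≤ m),
      (π k l hkl).comp (π l m hlm) = π k m (hkl.trans hlm))
    (s : invLimit S M (fun n => π n (n + 1) (Nat.le_succ n))) {k l : ℕ} (h : k ≤ l) :
    π k l h (s.1 l) = s.1 k := by
  induction l, h using Nat.le_induction with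
  | base => rw [hπ_refl k]; rfl
  | succ l h ih =>
      have hc := congrArg (fun g => g (s.1 (l + 1)))
        (hπ_comp k l (l + 1) h (Nat.le_succ l))
      simp only [LinearMap.comp_apply] at hc
      rw [← hc, invLimit_prop s l, ih]

lemma proj_surj (hπ_refl : ∀ n, π n n le_rfl = LinearMap.id)
    (hπ_comp : ∀ k l m (hkl : k ≤ l) (hlm : l ≤ m),
      (π k l hkl).comp (π l m hlm) = π k m (hkl.trans hlm))
    (hsurj : ∀ k l (h : k ≤ l), Function.Surjective (π k l h)) (n : ℕ) :
    Function.Surjective (invLimitProj S M (fun n => π n (n + 1) (Nat.le_succ n)) n) := by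
  intro x
  let t : ∀ m, M m := fun m => Nat.rec (π 0 n (Nat.zero_le n) x)
    (fun m tm => if h : m + 1 ≤ n then π (m + 1) n h x
      else Function.surjInv (hsurj m (m + 1) (Nat.le_succ m)) tm) m
  have ht_le : ∀ m (h : m ≤ n), t m = π m n h x := by
    intro m h
    cases m with
    | zero => rfl
    | succ m =>
        show (if h' : m + 1 ≤ n then π (m + 1) n h' x
          else Function.surjInv (hsurj m (m + 1) (Nat.le_succ m)) (t m)) = π (m + 1) n h x
        rw [dif_pos h]
  have hcompat : ∀ m, π m (m + 1) (Nat.le_succ m) (t (m + 1)) = t m := by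
    intro m
    by_cases h : m + 1 ≤ n
    · rw [ht_le (m + 1) h, ht_le m (le_trans (Nat.le_succ m) h)]
      have hc := congrArg (fun g => g x) (hπ_comp m (m + 1) n (Nat.le_succ m) h)
      simpa using hc
    · have ht1 : t (m + 1) = Function.surjInv (hsurj m (m + 1) (Nat.le_succ m)) (t m) := by
        show (if h' : m + 1 ≤ n then π (m + 1) n h' x
          else Function.surjInv (hsurj m (m + 1) (Nat.le_succ m)) (t m)) = _
        rw [dif_neg h]
      rw [ht1, Function.surjInv_eq (hsurj m (m + 1) (Nat.le_succ m))]
  refine ⟨⟨t, hcompat⟩, ?_⟩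
  show t n = x
  rw [ht_le n le_rfl, hπ_refl n]; rfl

end MyAux

variable (S : Type*) [CommRing S] (𝔞 : Ideal S)

/-- The transition map `M/𝔞^(n+1)M → M/𝔞^nM`. -/
def adicTransition (M : Type*) [AddCommGroup M] [Module S M] (n : ℕ) :
    (M ⧸ (𝔞 ^ (n + 1) • ⊤ : Submodule S M)) →ₗ[S] (M ⧸ (𝔞 ^ n • ⊤ : Submodule S M)) :=
  Submodule.mapQ _ _ LinearMap.id
    (by simpa using Submodule.smul_mono_left (Ideal.pow_le_pow_right (Nat.le_succ n)))

/-- The canonical map `M → lim_n M/𝔞^nM` into the inverse limit of the quotients. -/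
def toAdicInvLimit (M : Type*) [AddCommGroup M] [Module S M] :
    M →ₗ[S] invLimit S (fun n => M ⧸ (𝔞 ^ n • ⊤ : Submodule S M)) (adicTransition S 𝔞 M) :=
  LinearMap.codRestrict _ (LinearMap.pi fun n => Submodule.mkQ _)
    (fun m n => by simp [adicTransition, Submodule.mapQ_apply])

/-- For an inverse system `(M n)` with `𝔞^(n+1) (M n) = 0` (here `M n` denotes `M_{n+1}`),
the canonical map `(lim_k M_k)/𝔞^(n+1) (lim_k M_k) → M n` induced by the projection. -/
noncomputable def limInduced (M : ℕ → Type*) [∀ n, AddCommGroup (M n)] [∀ n, Module S (M n)]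
    (T : ∀ n, M (n + 1) →ₗ[S] M n)
    (hann : ∀ n, (𝔞 ^ (n + 1) • ⊤ : Submodule S (M n)) = ⊥) (n : ℕ) :
    (↥(invLimit S M T) ⧸ (𝔞 ^ (n + 1) • ⊤ : Submodule S ↥(invLimit S M T))) →ₗ[S] M n :=
  Submodule.liftQ _ (invLimitProj S M T n)
    (by
      refine Submodule.smul_le.2 fun r hr s _ => ?_
      rw [LinearMap.mem_ker, map_smul]
      have hm : r • invLimitProj S M T n s ∈ (𝔞 ^ (n + 1) • ⊤ : Submodule S (M n)) :=
        Submodule.smul_mem_smul hr Submodule.mem_top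
      rw [hann n] at hm
      simpa using hm)

/-- let `S` be noetherian and `𝔞`-adically complete and separated. Given an
inverse system `(M_n)_{n ≥ 1}` (here `M n` denotes `M_{n+1}`, so `𝔞^(n+1) (M n) = 0`) with
`M_1` finitely generated and each transition map surjective with kernel exactly
`𝔞^(k+1) M_l`, the inverse limit is a finitely generated `S`-module and for every `n` the
canonical map `(lim M)/𝔞^(n+1)(lim M) → M n` is an isomorphism. -/
theorem stmt14 [IsNoetherianRing S]
    (hS : Function.Bijective (toAdicInvLimit S 𝔞 S))
    (M : ℕ → Type*) [∀ n, AddCommGroup (M n)] [∀ n, Module S (M n)]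
    (π : ∀ k l, k ≤ l → (M l →ₗ[S] M k))
    (hπ_refl : ∀ n, π n n le_rfl = LinearMap.id)
    (hπ_comp : ∀ k l m (hkl : k ≤ l) (hlm : l ≤ m),
      (π k l hkl).comp (π l m hlm) = π k m (hkl.trans hlm))
    (hann : ∀ n, (𝔞 ^ (n + 1) • ⊤ : Submodule S (M n)) = ⊥)
    (hfg : Module.Finite S (M 0))
    (hsurj : ∀ k l (h : k ≤ l), Function.Surjective (π k l h))
    (hker : ∀ k l (h : k ≤ l),
      LinearMap.ker (π k l h) = (𝔞 ^ (k + 1) • ⊤ : Submodule S (M l))) :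
    Module.Finite S ↥(invLimit S M (fun n => π n (n + 1) (Nat.le_succ n))) ∧
    ∀ n, Function.Bijective
      (limInduced S 𝔞 M (fun n => π n (n + 1) (Nat.le_succ n)) hann n) := by
  classical
  haveI := hfg
  -- completeness instances for S
  have hH : IsHausdorff 𝔞 S := by
    constructor
    intro z hz
    have h0 : toAdicInvLimit S 𝔞 S z = toAdicInvLimit S 𝔞 S 0 := by
      apply Subtype.ext
      funext n
      show Submodule.mkQ _ z = (toAdicInvLimit S 𝔞 S 0).1 n
      rw [map_zero]
      show Submodule.mkQ _ z = 0
      rw [Submodule.mkQ_apply, Submodule.Quotient.mk_eq_zero]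
      exact SModEq.zero.1 (hz n)
    exact hS.1 h0
  have hP : IsPrecomplete 𝔞 S := by
    constructor
    intro f hf
    have hmem : (fun n => Submodule.mkQ (𝔞 ^ n • ⊤ : Submodule S S) (f n)) ∈
        invLimit S (fun n => S ⧸ (𝔞 ^ n • ⊤ : Submodule S S)) (adicTransition S 𝔞 S) := by
      intro n
      show adicTransition S 𝔞 S n (Submodule.Quotient.mk (f (n + 1)))
        = Submodule.Quotient.mk (f n)
      rw [adicTransition, Submodule.mapQ_apply, LinearMap.id_apply, Submodule.Quotient.eq]
      have := SModEq.sub_mem.1 (hf (Nat.le_succ n))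
      simpa using (𝔞 ^ n • ⊤ : Submodule S S).neg_mem this
    obtain ⟨z, hz⟩ := hS.2 ⟨_, hmem⟩
    refine ⟨z, fun n => ?_⟩
    have hcn : (Submodule.Quotient.mk z : S ⧸ (𝔞 ^ n • ⊤ : Submodule S S))
        = Submodule.Quotient.mk (f n) := congrFun (congrArg Subtype.val hz) n
    rw [SModEq.sub_mem]
    have := (Submodule.Quotient.eq _).1 hcn
    simpa using (𝔞 ^ n • ⊤ : Submodule S S).neg_mem this
  haveI := hH; haveI := hP
  haveI : IsAdicComplete 𝔞 S := ⟨⟩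
  -- generators
  obtain ⟨r, g, hg⟩ := Module.Finite.exists_fin (R := S) (M := M 0)
  have hxe : ∀ i, ∃ s, invLimitProj S M (fun n => π n (n + 1) (Nat.le_succ n)) 0 s = g i :=
    fun i => proj_surj hπ_refl hπ_comp hsurj 0 (g i)
  choose x hx0 using hxe
  have hx0' : ∀ i, (x i).1 0 = g i := hx0
  have hxk : ∀ (i : Fin r) {k l : ℕ} (h : k ≤ l), π k l h ((x i).1 l) = (x i).1 k :=
    fun i _ _ h => proj_pi hπ_refl hπ_comp (x i) h
  -- spans at every level
  have spanM : ∀ n, Submodule.span S (Set.range fun i => (x i).1 n) = ⊤ := by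
    intro n
    set N := Submodule.span S (Set.range fun i => (x i).1 n) with hN
    have hker0 : LinearMap.ker (π 0 n (Nat.zero_le n)) = 𝔞 ^ 1 • ⊤ := by
      simpa using hker 0 n (Nat.zero_le n)
    have h1 : (⊤ : Submodule S (M n)) ≤ N ⊔ 𝔞 ^ 1 • ⊤ := by
      intro y _
      have hy : π 0 n (Nat.zero_le n) y ∈ Submodule.span S (Set.range g) :=
        hg ▸ Submodule.mem_top
      rw [Submodule.mem_span_range_iff_exists_fun] at hy
      obtain ⟨c, hc⟩ := hy
      have hzN : (∑ i, c i • (x i).1 n) ∈ N := Submodule.sum_mem _ fun i _ =>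
        Submodule.smul_mem _ _ (Submodule.subset_span ⟨i, rfl⟩)
      have hker' : y - ∑ i, c i • (x i).1 n ∈ (𝔞 ^ 1 • ⊤ : Submodule S (M n)) := by
        rw [← hker0, LinearMap.mem_ker, map_sub, map_sum]
        simp only [map_smul, hxk _ (Nat.zero_le n), hx0']
        rw [hc, sub_self]
      have hyeq : y = (∑ i, c i • (x i).1 n) + (y - ∑ i, c i • (x i).1 n) := by abel
      exact hyeq ▸ Submodule.add_mem_sup hzN hker'
    have hstep : ∀ k, (⊤ : Submodule S (M n)) ≤ N ⊔ 𝔞 ^ (k + 1) • ⊤ := by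
      intro k
      induction k with
      | zero => exact h1
      | succ k ih =>
          refine le_trans ih (sup_le le_sup_left
            (le_trans (smul_mono_right _ h1) ?_))
          rw [Submodule.smul_sup _ _ _, ← Submodule.smul_assoc, smul_eq_mul, ← pow_add]
          exact sup_le (le_sup_of_le_left Submodule.smul_le_right) le_sup_right
    have := hstep n
    rw [hann n, sup_bot_eq] at this
    exact eq_top_iff.2 this
  -- component formula for sums
  have hFcomp : ∀ (c : Fin r → S) (m : ℕ),
      ((∑ i, c i • x i : invLimit S M (fun n => π n (n + 1) (Nat.le_succ n))) : ∀ k, M k) m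
        = ∑ i, c i • (x i).1 m := by
    intro c m
    have h := map_sum (invLimitProj S M (fun n => π n (n + 1) (Nat.le_succ n)) m)
      (fun i => c i • x i) Finset.univ
    simp only [map_smul] at h
    exact h
  -- one-step approximation
  have hstep' : ∀ (m : ℕ) (z : invLimit S M (fun n => π n (n + 1) (Nat.le_succ n))),
      z.1 m = 0 → ∃ c : Fin r → S, (∀ i, c i ∈ 𝔞 ^ (m + 1)) ∧
        z.1 (m + 1) = ∑ i, c i • (x i).1 (m + 1) := by
    intro m z hz
    have h1 : z.1 (m + 1) ∈ LinearMap.ker (π m (m + 1) (Nat.le_succ m)) := by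
      rw [LinearMap.mem_ker]
      exact (invLimit_prop z m).trans hz
    rw [hker m (m + 1) (Nat.le_succ m), ← spanM (m + 1),
      Submodule.mem_ideal_smul_span_iff_exists_sum] at h1
    obtain ⟨a, ha, hsum⟩ := h1
    refine ⟨fun i => a i, fun i => ha i, ?_⟩
    rw [← hsum]
    exact Finsupp.sum_fintype _ _ fun i => zero_smul S _
  -- main approximation lemma
  have approx : ∀ (n : ℕ) (y : invLimit S M (fun n => π n (n + 1) (Nat.le_succ n))),
      y.1 n = 0 → ∃ b : Fin r → S, (∀ i, b i ∈ 𝔞 ^ (n + 1)) ∧ y = ∑ i, b i • x i := by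
    intro n y hy
    have stepc : ∀ (K : ℕ) (v : Fin r → S), ∃ c : Fin r → S,
        (y - ∑ i, v i • x i).1 (n + K) = 0 →
        (∀ i, c i ∈ 𝔞 ^ (n + K + 1)) ∧ (y - ∑ i, (v i + c i) • x i).1 (n + K + 1) = 0 := by
      intro K v
      by_cases h : (y - ∑ i, v i • x i).1 (n + K) = 0
      · obtain ⟨c, hc1, hc2⟩ := hstep' (n + K) _ h
        refine ⟨c, fun _ => ⟨hc1, ?_⟩⟩
        have heq : (y - ∑ i, (v i + c i) • x i)
            = (y - ∑ i, v i • x i) - ∑ i, c i • x i := by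
          simp only [add_smul, Finset.sum_add_distrib]
          abel
        rw [heq]
        have hcomp : ((y - ∑ i, v i • x i) - ∑ i, c i • x i).1 (n + K + 1)
            = (y - ∑ i, v i • x i).1 (n + K + 1)
              - ((∑ i, c i • x i :
                  invLimit S M (fun n => π n (n + 1) (Nat.le_succ n))) : ∀ k, M k) (n + K + 1) :=
          rfl
        rw [hcomp, hc2, hFcomp, sub_self]
      · exact ⟨0, fun hc => absurd hc h⟩
    choose cs hcs using stepc
    let s : ℕ → Fin r → S := fun K => Nat.rec 0 (fun K v => v + cs K v) K
    have hs0 : s 0 = 0 := rfl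
    have hsS : ∀ K, s (K + 1) = s K + cs K (s K) := fun K => rfl
    have hinv : ∀ K, (y - ∑ i, s K i • x i).1 (n + K) = 0 := by
      intro K
      induction K with
      | zero => simp [hs0, hy]
      | succ K ih =>
          rw [hsS K]
          exact (hcs K (s K) ih).2
    have hdiffmem : ∀ K i, cs K (s K) i ∈ 𝔞 ^ (n + K + 1) :=
      fun K i => (hcs K (s K) (hinv K)).1 i
    have hsmem : ∀ K i, s K i ∈ 𝔞 ^ (n + 1) := by
      intro K
      induction K with
      | zero => intro i; simp [hs0]
      | succ K ih =>
          intro i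
          rw [hsS K]
          exact Ideal.add_mem _ (ih i)
            (Ideal.pow_le_pow_right (by omega) (hdiffmem K i))
    have hsdiff : ∀ K K' (h : K ≤ K') (i : Fin r), s K' i - s K i ∈ 𝔞 ^ (n + K + 1) := by
      intro K K' h i
      induction K', h using Nat.le_induction with
      | base => simp
      | succ K' h ih =>
          have heq : s (K' + 1) i - s K i = cs K' (s K') i + (s K' i - s K i) := by
            rw [hsS K']; show s K' i + cs K' (s K') i - s K i = _; ring
          rw [heq]
          exact Ideal.add_mem _
            (Ideal.pow_le_pow_right (by omega) (hdiffmem K' i)) ih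
    have hb : ∀ i, ∃ bi : S, ∀ K, s K i ≡ bi [SMOD (𝔞 ^ K • ⊤ : Submodule S S)] := by
      intro i
      refine hP.prec fun {m k} hmk => ?_
      rw [SModEq.sub_mem, my_ideal_smul_top_eq]
      have hmem' : s m i - s k i ∈ 𝔞 ^ (n + m + 1) := by
        simpa [neg_sub] using (𝔞 ^ (n + m + 1)).neg_mem (hsdiff m k hmk i)
      exact Ideal.pow_le_pow_right (by omega) hmem'
    choose b hbs using hb
    have hbdiff : ∀ i K, b i - s K i ∈ 𝔞 ^ K := by
      intro i K
      have := SModEq.sub_mem.1 (hbs i K)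
      rw [my_ideal_smul_top_eq] at this
      simpa [neg_sub] using (𝔞 ^ K).neg_mem this
    refine ⟨b, ?_, ?_⟩
    · intro i
      have hq : ∀ K : ℕ, (Submodule.Quotient.mk (b i) :
          S ⧸ (𝔞 ^ (n + 1) • ⊤ : Submodule S S)) ∈
          (𝔞 ^ K • ⊤ : Submodule S (S ⧸ (𝔞 ^ (n + 1) • ⊤ : Submodule S S))) := by
        intro K
        have hmk : (Submodule.Quotient.mk (b i) :
            S ⧸ (𝔞 ^ (n + 1) • ⊤ : Submodule S S)) = Submodule.Quotient.mk (b i - s K i) := by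
          rw [Submodule.Quotient.eq]
          simpa [my_ideal_smul_top_eq] using hsmem K i
        have hmk2 : (Submodule.Quotient.mk (b i - s K i) :
            S ⧸ (𝔞 ^ (n + 1) • ⊤ : Submodule S S))
            = (b i - s K i) • Submodule.Quotient.mk 1 := by
          rw [← Submodule.Quotient.mk_smul]
          congr 1
          simp
        rw [hmk, hmk2]
        exact Submodule.smul_mem_smul (hbdiff i K) Submodule.mem_top
      have hmem : (Submodule.Quotient.mk (b i) :
          S ⧸ (𝔞 ^ (n + 1) • ⊤ : Submodule S S)) ∈
          (⨅ K : ℕ, 𝔞 ^ K • ⊤ : Submodule S (S ⧸ (𝔞 ^ (n + 1) • ⊤ : Submodule S S))) :=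
        Submodule.mem_iInf _ |>.2 hq
      obtain ⟨u, hu⟩ := (Ideal.mem_iInf_smul_pow_eq_bot_iff 𝔞 _).1 hmem
      have hunit : IsUnit (1 - (u : S)) := by
        have hj := IsAdicComplete.le_jacobson_bot (I := 𝔞) u.2
        have := Ideal.mem_jacobson_bot.1 hj (-1)
        have heq : (u : S) * (-1) + 1 = 1 - (u : S) := by ring
        rwa [heq] at this
      have hzero : (1 - (u : S)) • (Submodule.Quotient.mk (b i) :
          S ⧸ (𝔞 ^ (n + 1) • ⊤ : Submodule S S)) = 0 := by
        rw [sub_smul, one_smul, hu, sub_self]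
      obtain ⟨w, hw⟩ := hunit
      have hz2 : (Submodule.Quotient.mk (b i) :
          S ⧸ (𝔞 ^ (n + 1) • ⊤ : Submodule S S)) = 0 := by
        have h3 : w • (Submodule.Quotient.mk (b i) :
            S ⧸ (𝔞 ^ (n + 1) • ⊤ : Submodule S S)) = 0 := by
          rw [Units.smul_def, hw]; exact hzero
        have h4 := congrArg (fun t => w⁻¹ • t) h3
        simpa using h4
      rw [Submodule.Quotient.mk_eq_zero, my_ideal_smul_top_eq] at hz2
      exact hz2
    · apply Subtype.ext
      funext m
      have h1 : (y - ∑ i, s (m + 1) i • x i).1 m = 0 := by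
        have h2 := hinv (m + 1)
        have h3 := proj_pi hπ_refl hπ_comp (y - ∑ i, s (m + 1) i • x i)
          (show m ≤ n + (m + 1) by omega)
        rw [h2, map_zero] at h3
        exact h3.symm
      have hy1 : y.1 m = ∑ i, s (m + 1) i • (x i).1 m := by
        have hsub : (y - ∑ i, s (m + 1) i • x i).1 m
            = y.1 m - ((∑ i, s (m + 1) i • x i :
              invLimit S M (fun n => π n (n + 1) (Nat.le_succ n))) : ∀ k, M k) m := rfl
        rw [hsub, hFcomp] at h1
        exact sub_eq_zero.1 h1
      have hzero : ∀ i ∈ Finset.univ, (s (m + 1) i - b i) • (x i).1 m = 0 := by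
        intro i _
        have hd : s (m + 1) i - b i ∈ 𝔞 ^ (m + 1) := by
          simpa [neg_sub] using (𝔞 ^ (m + 1)).neg_mem (hbdiff i (m + 1))
        have hmm : (s (m + 1) i - b i) • (x i).1 m ∈
            (𝔞 ^ (m + 1) • ⊤ : Submodule S (M m)) :=
          Submodule.smul_mem_smul hd Submodule.mem_top
        rw [hann m] at hmm
        simpa using hmm
      show y.1 m = ((∑ i, b i • x i :
        invLimit S M (fun n => π n (n + 1) (Nat.le_succ n))) : ∀ k, M k) m
      rw [hFcomp, hy1]
      have := Finset.sum_eq_zero hzero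
      simp only [sub_smul, Finset.sum_sub_distrib] at this
      exact sub_eq_zero.1 this
  -- surjectivity of the finite presentation
  have hFsurj : ∀ y : invLimit S M (fun n => π n (n + 1) (Nat.le_succ n)),
      ∃ c : Fin r → S, y = ∑ i, c i • x i := by
    intro y
    have hy0 : y.1 0 ∈ Submodule.span S (Set.range fun i => (x i).1 0) :=
      spanM 0 ▸ Submodule.mem_top
    rw [Submodule.mem_span_range_iff_exists_fun] at hy0
    obtain ⟨c0, hc0⟩ := hy0
    have hz : (y - ∑ i, c0 i • x i).1 0 = 0 := by
      have hsub : (y - ∑ i, c0 i • x i).1 0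
          = y.1 0 - ((∑ i, c0 i • x i :
            invLimit S M (fun n => π n (n + 1) (Nat.le_succ n))) : ∀ k, M k) 0 := rfl
      rw [hsub, hFcomp, hc0, sub_self]
    obtain ⟨b, _, hb⟩ := approx 0 _ hz
    refine ⟨c0 + b, ?_⟩
    have hsplit : (∑ i, (c0 + b) i • x i :
        invLimit S M (fun n => π n (n + 1) (Nat.le_succ n)))
        = ∑ i, c0 i • x i + ∑ i, b i • x i := by
      simp [add_smul, Finset.sum_add_distrib]
    rw [hsplit, ← hb]
    abel
  constructor
  · -- finiteness
    let F : (Fin r → S) →ₗ[S] ↥(invLimit S M (fun n => π n (n + 1) (Nat.le_succ n))) :=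
      ∑ i : Fin r, LinearMap.smulRight (LinearMap.proj i) (x i)
    have hF : ∀ c, F c = ∑ i, c i • x i := by
      intro c
      simp [F, LinearMap.sum_apply, LinearMap.smulRight_apply, LinearMap.proj_apply]
    exact Module.Finite.of_surjective F fun y => (hFsurj y).elim fun c hc =>
      ⟨c, by rw [hF, ← hc]⟩
  · intro n
    constructor
    · -- injectivity
      have hkerle : LinearMap.ker (invLimitProj S M (fun k => π k (k + 1) (Nat.le_succ k)) n)
          ≤ (𝔞 ^ (n + 1) • ⊤ : Submodule S
            ↥(invLimit S M (fun k => π k (k + 1) (Nat.le_succ k)))) := by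
        intro y hy
        rw [LinearMap.mem_ker] at hy
        obtain ⟨b, hbmem, hb⟩ := approx n y hy
        rw [hb]
        exact Submodule.sum_mem _ fun i _ =>
          Submodule.smul_mem_smul (hbmem i) Submodule.mem_top
      exact LinearMap.ker_eq_bot.1 (Submodule.ker_liftQ_eq_bot _ _ _ hkerle)
    · -- surjectivity
      intro mval
      obtain ⟨sv, hsv⟩ := proj_surj hπ_refl hπ_comp hsurj n mval
      exact ⟨Submodule.Quotient.mk sv, hsv⟩
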